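/- In the N-class model with N = 2, κ ∈ (1,2), premiums c¹ = (θ₁, κθ₁), c² = (θ₂, κθ₂) with θ₁, θ₂ ∈ [μ, M/κ], and η given by η(t) = 1 − (1−k₂)e^{−k₁t} for t ≥ 0 and η(t) = k₂e^{k₁t} for t < 0 (k₁, k₂ ∈ (0,1)), let V* be the unique fixed point of the Bellman operator L_c. Then for every state (n,i) ∈ {1,2} × {1,2}, the infimum over b ≥ 0 defining (L_c V*)(n,i) is attained at the unique point b̄* := δ(κ−1)·[ η̄·θ₁ + (1−η̄)·θ₂ ], where η̄ := η(θ₂ − θ₁); in particular the optimal reporting barrier is the same for all four states and is strictly positive. -/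

import Mathlib

noncomputable section

open MeasureTheory Set

/-- Cumulative distribution function of the loss: point mass `p₀` at zero plus density `fL`. -/
def lossCdf (p₀ : ℝ) (fL : ℝ → ℝ) (x : ℝ) : ℝ := p₀ + ∫ ℓ in (0:ℝ)..x, fL ℓ

/-- Rate class after a bonus: `n↓ = max(n−1,1)` (classes are 0-indexed by `Fin N`). -/
def rdown {N : ℕ} (n : Fin N) : Fin N :=
  ⟨n.val - 1, lt_of_le_of_lt (Nat.sub_le _ _) n.isLt⟩

/-- Rate class after a malus: `n↑ = min(n+1,N)` (classes are 0-indexed by `Fin N`). -/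
def rup {N : ℕ} (n : Fin N) : Fin N :=
  if h : n.val + 1 < N then ⟨n.val + 1, h⟩ else n

/-- Company-switching probability `σ(n,i)`; company `0` is Company 1, company `1` is
Company 2, and `c i` is the premium schedule of company `i`. -/
def swProb {N : ℕ} (η : ℝ → ℝ) (c : Fin 2 → Fin N → ℝ) (n : Fin N) (i : Fin 2) : ℝ :=
  if i = 0 then 1 - η (c 1 (rdown n) - c 0 (rdown n))
  else η (c 1 (rdown n) - c 0 (rdown n))

/-- Continuation value after a bonus: `W↓(n,i;v)`. (`i + 1` in `Fin 2` is the other company.) -/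
def Wdown {N : ℕ} (η : ℝ → ℝ) (c : Fin 2 → Fin N → ℝ) (v : Fin N × Fin 2 → ℝ)
    (n : Fin N) (i : Fin 2) : ℝ :=
  (1 - swProb η c n i) * v (rdown n, i) + swProb η c n i * v (rdown n, i + 1)

/-- Continuation value after a malus: `W↑(n,i;v)`. -/
def Wup {N : ℕ} (η : ℝ → ℝ) (c : Fin 2 → Fin N → ℝ) (v : Fin N × Fin 2 → ℝ)
    (n : Fin N) (i : Fin 2) : ℝ :=
  (1 - swProb η c n i) * v (rup n, i) + swProb η c n i * v (rup n, i + 1)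

/-- One-step Bellman objective in the reporting barrier `b`. -/
def bellObj {N : ℕ} (p₀ δ : ℝ) (fL η : ℝ → ℝ) (c : Fin 2 → Fin N → ℝ)
    (v : Fin N × Fin 2 → ℝ) (x : Fin N × Fin 2) (b : ℝ) : ℝ :=
  δ * (c x.2 x.1 + (∫ ℓ in (0:ℝ)..b, ℓ * fL ℓ)
    + lossCdf p₀ fL b * Wdown η c v x.1 x.2
    + (1 - lossCdf p₀ fL b) * Wup η c v x.1 x.2)

/-- The Bellman operator `L_c`. -/
def bellOp {N : ℕ} (p₀ δ : ℝ) (fL η : ℝ → ℝ) (c : Fin 2 → Fin N → ℝ)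
    (v : Fin N × Fin 2 → ℝ) (x : Fin N × Fin 2) : ℝ :=
  ⨅ b : {b : ℝ // 0 ≤ b}, bellObj p₀ δ fL η c v x b.1

/-- The set of admissible premium pairs. -/
def premSet (N : ℕ) (μ M : ℝ) : Set (Fin 2 → Fin N → ℝ) :=
  {c | ∀ i : Fin 2, Monotone (c i) ∧ ∀ n : Fin N, c i n ∈ Set.Icc μ M}


/-- The 2-class premium schedules `c¹ = (θ₁, κθ₁)`, `c² = (θ₂, κθ₂)`. -/
def prem2 (κ θ₁ θ₂ : ℝ) : Fin 2 → Fin 2 → ℝ := fun i n =>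
  (if i = 0 then θ₁ else θ₂) * (if n = 0 then 1 else κ)

/-- The exponential choice function `η`. -/
def expEta (k₁ k₂ t : ℝ) : ℝ :=
  if 0 ≤ t then 1 - (1 - k₂) * Real.exp (-(k₁ * t)) else k₂ * Real.exp (k₁ * t)

/-- The closed-form optimal barrier `b̄* = δ(κ−1)(η̄θ₁ + (1−η̄)θ₂)` with `η̄ = η(θ₂−θ₁)`. -/
def barrier2 (δ κ k₁ k₂ θ₁ θ₂ : ℝ) : ℝ :=
  δ * (κ - 1) * (expEta k₁ k₂ (θ₂ - θ₁) * θ₁ + (1 - expEta k₁ k₂ (θ₂ - θ₁)) * θ₂)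

/-!
Up to a constant, the objective at state `x` is `δ ∫₀ᵇ (ℓ - Δ) f_L(ℓ) dℓ`, where `Δ = W↑ - W↓` is
the continuation gap at `x`; as `f_L > 0` on `(0, ∞)`, for `Δ ≥ 0` this is strictly minimised over
`b ≥ 0` at `b = Δ`. With two classes every state moves down to class 1 and up to class 2, so the
objectives at `(2, i)` and `(1, i)` differ by the constant `δ (cⁱ₂ - cⁱ₁)`, and the fixed point
satisfies `V*(2, i) - V*(1, i) = δ (κ - 1) θᵢ`. The gap is therefore the same in all four states,
namely `δ (κ - 1) (η̄ θ₁ + (1 - η̄) θ₂) = b̄*`, which is positive as a convex combination of the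
`θᵢ > 0`.
-/

section LossIntegrals

variable {f : ℝ → ℝ}

lemma intervalIntegrable_of_integrableOn_Ioi_zero (hf : IntegrableOn f (Ioi 0)) {a b : ℝ}
    (ha : 0 ≤ a) (hb : 0 ≤ b) : IntervalIntegrable f volume a b := by
  rw [intervalIntegrable_iff]
  exact hf.mono_set fun x hx => (le_min ha hb).trans_lt hx.1

lemma intervalIntegrable_sub_mul (hf : IntegrableOn f (Ioi 0)) (B : ℝ) {a b : ℝ}
    (ha : 0 ≤ a) (hb : 0 ≤ b) : IntervalIntegrable (fun ℓ => (ℓ - B) * f ℓ) volume a b :=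
  (intervalIntegrable_of_integrableOn_Ioi_zero hf ha hb).continuousOn_mul (by fun_prop)

lemma integral_sub_mul_eq (hf : IntegrableOn f (Ioi 0)) (Δ : ℝ) {b : ℝ} (hb : 0 ≤ b) :
    ∫ ℓ in (0:ℝ)..b, (ℓ - Δ) * f ℓ = (∫ ℓ in (0:ℝ)..b, ℓ * f ℓ) - Δ * ∫ ℓ in (0:ℝ)..b, f ℓ := by
  have hfb := intervalIntegrable_of_integrableOn_Ioi_zero hf le_rfl hb
  simp only [sub_mul]
  rw [intervalIntegral.integral_sub (hfb.continuousOn_mul (continuousOn_id' _)) (hfb.const_mul _),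
    intervalIntegral.integral_const_mul]

lemma bddBelow_integral_sub_mul (hf0 : ∀ ℓ, 0 < ℓ → 0 ≤ f ℓ) (hf : IntegrableOn f (Ioi 0))
    (Δ : ℝ) : BddBelow ((fun b => ∫ ℓ in (0:ℝ)..b, (ℓ - Δ) * f ℓ) '' Ici 0) := by
  refine ⟨-(|Δ| * ∫ ℓ in Ioi (0:ℝ), f ℓ), ?_⟩
  rintro _ ⟨b, hb, rfl⟩
  have hfb := intervalIntegrable_of_integrableOn_Ioi_zero hf le_rfl hb
  calc -(|Δ| * ∫ ℓ in Ioi (0:ℝ), f ℓ) ≤ -(|Δ| * ∫ ℓ in (0:ℝ)..b, f ℓ) := by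
        gcongr
        rw [intervalIntegral.integral_of_le hb]
        exact setIntegral_mono_set hf
          ((ae_restrict_iff' measurableSet_Ioi).mpr (ae_of_all _ hf0))
          Ioc_subset_Ioi_self.eventuallyLE
    _ = ∫ ℓ in (0:ℝ)..b, -|Δ| * f ℓ := by rw [intervalIntegral.integral_const_mul]; ring
    _ ≤ ∫ ℓ in (0:ℝ)..b, (ℓ - Δ) * f ℓ := by
        refine intervalIntegral.integral_mono_on_of_le_Ioo hb (hfb.const_mul _)
          (intervalIntegrable_sub_mul hf Δ le_rfl hb) fun ℓ hℓ => ?_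
        exact mul_le_mul_of_nonneg_right (by linarith [le_abs_self Δ, hℓ.1]) (hf0 ℓ hℓ.1)

lemma integral_sub_mul_pos (hf0 : ∀ ℓ, 0 < ℓ → 0 < f ℓ) (hf : IntegrableOn f (Ioi 0))
    {B b : ℝ} (hB : 0 ≤ B) (hb : 0 ≤ b) (hne : b ≠ B) :
    0 < ∫ ℓ in B..b, (ℓ - B) * f ℓ := by
  rcases hne.lt_or_gt with hlt | hlt
  · have hneg : 0 < ∫ ℓ in b..B, -((ℓ - B) * f ℓ) :=
      intervalIntegral.intervalIntegral_pos_of_pos_on (intervalIntegrable_sub_mul hf B hb hB).neg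
        (fun ℓ hℓ => neg_pos.2 (mul_neg_of_neg_of_pos (sub_neg.2 hℓ.2)
          (hf0 ℓ (hb.trans_lt hℓ.1)))) hlt
    rwa [intervalIntegral.integral_neg, ← intervalIntegral.integral_symm] at hneg
  · exact intervalIntegral.intervalIntegral_pos_of_pos_on (intervalIntegrable_sub_mul hf B hB hb)
      (fun ℓ hℓ => mul_pos (sub_pos.2 hℓ.1) (hf0 ℓ (hB.trans_lt hℓ.1))) hlt

lemma integral_sub_mul_lt (hf0 : ∀ ℓ, 0 < ℓ → 0 < f ℓ) (hf : IntegrableOn f (Ioi 0))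
    {B b : ℝ} (hB : 0 ≤ B) (hb : 0 ≤ b) (hne : b ≠ B) :
    ∫ ℓ in (0:ℝ)..B, (ℓ - B) * f ℓ < ∫ ℓ in (0:ℝ)..b, (ℓ - B) * f ℓ := by
  rw [← sub_pos, intervalIntegral.integral_interval_sub_left
    (intervalIntegrable_sub_mul hf B le_rfl hb) (intervalIntegrable_sub_mul hf B le_rfl hB)]
  exact integral_sub_mul_pos hf0 hf hB hb hne

end LossIntegrals

section Bellman

variable {N : ℕ} {p₀ δ : ℝ} {fL η : ℝ → ℝ} {c : Fin 2 → Fin N → ℝ} {v : Fin N × Fin 2 → ℝ}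

lemma bellObj_eq_add_integral (hf : IntegrableOn fL (Ioi 0)) (x : Fin N × Fin 2) {b : ℝ}
    (hb : 0 ≤ b) :
    bellObj p₀ δ fL η c v x b
      = δ * (c x.2 x.1 + p₀ * Wdown η c v x.1 x.2 + (1 - p₀) * Wup η c v x.1 x.2)
        + δ * ∫ ℓ in (0:ℝ)..b, (ℓ - (Wup η c v x.1 x.2 - Wdown η c v x.1 x.2)) * fL ℓ := by
  rw [integral_sub_mul_eq hf _ hb, bellObj, lossCdf]
  ring

lemma bddBelow_bellObj (hδ : 0 ≤ δ) (hf0 : ∀ ℓ, 0 < ℓ → 0 ≤ fL ℓ) (hf : IntegrableOn fL (Ioi 0))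
    (x : Fin N × Fin 2) :
    BddBelow (range fun b : {b : ℝ // 0 ≤ b} => bellObj p₀ δ fL η c v x b) := by
  obtain ⟨m, hm⟩ := bddBelow_integral_sub_mul hf0 hf (Wup η c v x.1 x.2 - Wdown η c v x.1 x.2)
  refine ⟨δ * (c x.2 x.1 + p₀ * Wdown η c v x.1 x.2 + (1 - p₀) * Wup η c v x.1 x.2) + δ * m, ?_⟩
  rintro _ ⟨⟨b, hb⟩, rfl⟩
  dsimp only
  rw [bellObj_eq_add_integral hf x hb]
  gcongr
  exact hm ⟨b, hb, rfl⟩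

lemma bellObj_lt_of_ne (hδ : 0 < δ) (hf0 : ∀ ℓ, 0 < ℓ → 0 < fL ℓ) (hf : IntegrableOn fL (Ioi 0))
    {x : Fin N × Fin 2} {B b : ℝ} (hgap : Wup η c v x.1 x.2 - Wdown η c v x.1 x.2 = B)
    (hB : 0 ≤ B) (hb : 0 ≤ b) (hne : b ≠ B) :
    bellObj p₀ δ fL η c v x B < bellObj p₀ δ fL η c v x b := by
  rw [bellObj_eq_add_integral hf x hB, bellObj_eq_add_integral hf x hb, hgap]
  gcongr
  exact integral_sub_mul_lt hf0 hf hB hb hne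

lemma bellOp_eq_bellObj_of_forall_le {x : Fin N × Fin 2} {B : ℝ} (hB : 0 ≤ B)
    (h : ∀ b, 0 ≤ b → bellObj p₀ δ fL η c v x B ≤ bellObj p₀ δ fL η c v x b) :
    bellOp p₀ δ fL η c v x = bellObj p₀ δ fL η c v x B :=
  ciInf_eq_of_forall_ge_of_forall_gt_exists_lt (fun b => h b.1 b.2) fun _ hw => ⟨⟨B, hB⟩, hw⟩

end Bellman

section TwoClasses

variable {p₀ δ : ℝ} {fL η : ℝ → ℝ} {c : Fin 2 → Fin 2 → ℝ} {v : Fin 2 × Fin 2 → ℝ}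

lemma rdown_fin_two (n : Fin 2) : rdown n = 0 := by
  revert n; decide

lemma rup_fin_two (n : Fin 2) : rup n = 1 := by
  revert n; decide

lemma bellObj_one (i : Fin 2) (b : ℝ) :
    bellObj p₀ δ fL η c v (1, i) b = bellObj p₀ δ fL η c v (0, i) b + δ * (c i 1 - c i 0) := by
  simp only [bellObj, Wdown, Wup, swProb, rdown_fin_two, rup_fin_two]
  ring

lemma bellOp_one (hδ : 0 ≤ δ) (hf0 : ∀ ℓ, 0 < ℓ → 0 ≤ fL ℓ) (hf : IntegrableOn fL (Ioi 0))
    (i : Fin 2) :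
    bellOp p₀ δ fL η c v (1, i) = bellOp p₀ δ fL η c v (0, i) + δ * (c i 1 - c i 0) := by
  rw [bellOp, bellOp, ciInf_add (bddBelow_bellObj hδ hf0 hf _)]
  simp only [bellObj_one]

lemma Wup_sub_Wdown_of_bellOp_eq (hδ : 0 ≤ δ) (hf0 : ∀ ℓ, 0 < ℓ → 0 ≤ fL ℓ)
    (hf : IntegrableOn fL (Ioi 0)) (hv : bellOp p₀ δ fL η c v = v) (n i : Fin 2) :
    Wup η c v n i - Wdown η c v n i
      = δ * ((1 - swProb η c n i) * (c i 1 - c i 0)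
        + swProb η c n i * (c (i + 1) 1 - c (i + 1) 0)) := by
  have hstep : ∀ j, v (1, j) = v (0, j) + δ * (c j 1 - c j 0) := fun j => by
    rw [← congrFun hv (1, j), ← congrFun hv (0, j)]
    exact bellOp_one hδ hf0 hf j
  simp only [Wup, Wdown, rdown_fin_two, rup_fin_two, hstep]
  ring

end TwoClasses

lemma expEta_mem_Icc {k₁ k₂ : ℝ} (hk₁ : 0 ≤ k₁) (hk₂ : k₂ ∈ Icc (0:ℝ) 1) (t : ℝ) :
    expEta k₁ k₂ t ∈ Icc (0:ℝ) 1 := by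
  obtain ⟨hk₂0, hk₂1⟩ := hk₂
  unfold expEta
  split_ifs with ht
  · have he : Real.exp (-(k₁ * t)) ≤ 1 := Real.exp_le_one_iff.2 (by nlinarith)
    have he0 := Real.exp_pos (-(k₁ * t))
    constructor <;> nlinarith
  · have he : Real.exp (k₁ * t) ≤ 1 := Real.exp_le_one_iff.2 (by nlinarith)
    have he0 := Real.exp_pos (k₁ * t)
    constructor <;> nlinarith

lemma barrier2_pos {δ κ k₁ k₂ θ₁ θ₂ : ℝ} (hδ : 0 < δ) (hκ : 1 < κ) (hk₁ : 0 ≤ k₁)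
    (hk₂ : k₂ ∈ Icc (0:ℝ) 1) (hθ₁ : 0 < θ₁) (hθ₂ : 0 < θ₂) :
    0 < barrier2 δ κ k₁ k₂ θ₁ θ₂ := by
  obtain ⟨hη0, hη1⟩ := expEta_mem_Icc hk₁ hk₂ (θ₂ - θ₁)
  have hmix : 0 < expEta k₁ k₂ (θ₂ - θ₁) * θ₁ + (1 - expEta k₁ k₂ (θ₂ - θ₁)) * θ₂ := by
    rcases le_total θ₁ θ₂ with h | h
    · nlinarith [mul_nonneg (sub_nonneg.2 hη1) (sub_nonneg.2 h)]
    · nlinarith [mul_nonneg hη0 (sub_nonneg.2 h)]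
  exact mul_pos (mul_pos hδ (sub_pos.2 hκ)) hmix

lemma Wup_sub_Wdown_prem2 {p₀ δ κ k₁ k₂ θ₁ θ₂ : ℝ} {fL : ℝ → ℝ} {v : Fin 2 × Fin 2 → ℝ}
    (hδ : 0 ≤ δ) (hf0 : ∀ ℓ, 0 < ℓ → 0 ≤ fL ℓ) (hf : IntegrableOn fL (Ioi 0))
    (hv : bellOp p₀ δ fL (expEta k₁ k₂) (prem2 κ θ₁ θ₂) v = v) (x : Fin 2 × Fin 2) :
    Wup (expEta k₁ k₂) (prem2 κ θ₁ θ₂) v x.1 x.2 - Wdown (expEta k₁ k₂) (prem2 κ θ₁ θ₂) v x.1 x.2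
      = barrier2 δ κ k₁ k₂ θ₁ θ₂ := by
  obtain ⟨n, i⟩ := x
  rw [Wup_sub_Wdown_of_bellOp_eq hδ hf0 hf hv]
  fin_cases i <;>
    simp only [swProb, prem2, barrier2, rdown_fin_two, Fin.zero_eta, Fin.mk_one, Fin.isValue,
      Fin.reduceAdd, one_ne_zero, ↓reduceIte, mul_one, sub_sub_cancel, zero_add] <;>
    ring

theorem stmt_7_general (p₀ δ μ M κ k₁ k₂ θ₁ θ₂ : ℝ) (fL : ℝ → ℝ)
    (hδ : δ ∈ Set.Ioo (0:ℝ) 1)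
    (hκ : κ ∈ Set.Ioo (1:ℝ) 2)
    (hk₁ : k₁ ∈ Set.Ioo (0:ℝ) 1) (hk₂ : k₂ ∈ Set.Ioo (0:ℝ) 1)
    (hfpos : ∀ ℓ : ℝ, 0 < ℓ → 0 < fL ℓ)
    (hfint : IntegrableOn fL (Set.Ioi 0))
    (hμpos : 0 < μ)
    (hθ₁ : θ₁ ∈ Set.Icc μ (M / κ)) (hθ₂ : θ₂ ∈ Set.Icc μ (M / κ))
    (V : Fin 2 × Fin 2 → ℝ)
    (hV : bellOp p₀ δ fL (expEta k₁ k₂) (prem2 κ θ₁ θ₂) V = V) :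
    0 < barrier2 δ κ k₁ k₂ θ₁ θ₂ ∧
    ∀ x : Fin 2 × Fin 2,
      bellOp p₀ δ fL (expEta k₁ k₂) (prem2 κ θ₁ θ₂) V x
        = bellObj p₀ δ fL (expEta k₁ k₂) (prem2 κ θ₁ θ₂) V x
            (barrier2 δ κ k₁ k₂ θ₁ θ₂) ∧
      (∀ b : ℝ, 0 ≤ b →
        bellObj p₀ δ fL (expEta k₁ k₂) (prem2 κ θ₁ θ₂) V x (barrier2 δ κ k₁ k₂ θ₁ θ₂)
          ≤ bellObj p₀ δ fL (expEta k₁ k₂) (prem2 κ θ₁ θ₂) V x b) ∧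
      (∀ b : ℝ, 0 ≤ b →
        bellObj p₀ δ fL (expEta k₁ k₂) (prem2 κ θ₁ θ₂) V x b
          = bellObj p₀ δ fL (expEta k₁ k₂) (prem2 κ θ₁ θ₂) V x
              (barrier2 δ κ k₁ k₂ θ₁ θ₂) →
        b = barrier2 δ κ k₁ k₂ θ₁ θ₂) := by
  have hB : 0 < barrier2 δ κ k₁ k₂ θ₁ θ₂ :=
    barrier2_pos hδ.1 hκ.1 hk₁.1.le (Ioo_subset_Icc_self hk₂) (hμpos.trans_le hθ₁.1)
      (hμpos.trans_le hθ₂.1)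
  have hlt : ∀ x b, 0 ≤ b → b ≠ barrier2 δ κ k₁ k₂ θ₁ θ₂ →
      bellObj p₀ δ fL (expEta k₁ k₂) (prem2 κ θ₁ θ₂) V x (barrier2 δ κ k₁ k₂ θ₁ θ₂)
        < bellObj p₀ δ fL (expEta k₁ k₂) (prem2 κ θ₁ θ₂) V x b := fun x _ hb hne =>
    bellObj_lt_of_ne hδ.1 hfpos hfint
      (Wup_sub_Wdown_prem2 hδ.1.le (fun ℓ hℓ => (hfpos ℓ hℓ).le) hfint hV x) hB.le hb hne
  have hle : ∀ x b, 0 ≤ b →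
      bellObj p₀ δ fL (expEta k₁ k₂) (prem2 κ θ₁ θ₂) V x (barrier2 δ κ k₁ k₂ θ₁ θ₂)
        ≤ bellObj p₀ δ fL (expEta k₁ k₂) (prem2 κ θ₁ θ₂) V x b := fun x b hb => by
    rcases eq_or_ne b (barrier2 δ κ k₁ k₂ θ₁ θ₂) with rfl | hne
    · exact le_rfl
    · exact (hlt x b hb hne).le
  refine ⟨hB, fun x => ⟨bellOp_eq_bellObj_of_forall_le hB.le (hle x), hle x, fun b hb heq => ?_⟩⟩
  by_contra hne
  exact (hlt x b hb hne).ne' heq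

/-- in the 2-class model with exponential choice function, for every state
the infimum defining the Bellman operator at the fixed point `V*` is attained at the
unique point `b̄* = δ(κ−1)(η̄θ₁ + (1−η̄)θ₂)`, which is strictly positive. -/
theorem stmt_7 (p₀ δ μ M κ k₁ k₂ θ₁ θ₂ : ℝ) (fL : ℝ → ℝ)
    (hp₀ : p₀ ∈ Set.Ioo (0:ℝ) 1) (hδ : δ ∈ Set.Ioo (0:ℝ) 1)
    (hκ : κ ∈ Set.Ioo (1:ℝ) 2)
    (hk₁ : k₁ ∈ Set.Ioo (0:ℝ) 1) (hk₂ : k₂ ∈ Set.Ioo (0:ℝ) 1)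
    (hfc : ContinuousOn fL (Set.Ioi 0)) (hfpos : ∀ ℓ : ℝ, 0 < ℓ → 0 < fL ℓ)
    (hfint : IntegrableOn fL (Set.Ioi 0))
    (hftot : ∫ ℓ in Set.Ioi (0:ℝ), fL ℓ = 1 - p₀)
    (hmint : IntegrableOn (fun ℓ => ℓ * fL ℓ) (Set.Ioi 0))
    (hμ : μ = ∫ ℓ in Set.Ioi (0:ℝ), ℓ * fL ℓ) (hμpos : 0 < μ) (hM : κ * μ ≤ M)
    (hθ₁ : θ₁ ∈ Set.Icc μ (M / κ)) (hθ₂ : θ₂ ∈ Set.Icc μ (M / κ))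
    (V : Fin 2 × Fin 2 → ℝ)
    (hV : bellOp p₀ δ fL (expEta k₁ k₂) (prem2 κ θ₁ θ₂) V = V)
    (hVuniq : ∀ v : Fin 2 × Fin 2 → ℝ,
      bellOp p₀ δ fL (expEta k₁ k₂) (prem2 κ θ₁ θ₂) v = v → v = V) :
    0 < barrier2 δ κ k₁ k₂ θ₁ θ₂ ∧
    ∀ x : Fin 2 × Fin 2,
      bellOp p₀ δ fL (expEta k₁ k₂) (prem2 κ θ₁ θ₂) V x
        = bellObj p₀ δ fL (expEta k₁ k₂) (prem2 κ θ₁ θ₂) V x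
            (barrier2 δ κ k₁ k₂ θ₁ θ₂) ∧
      (∀ b : ℝ, 0 ≤ b →
        bellObj p₀ δ fL (expEta k₁ k₂) (prem2 κ θ₁ θ₂) V x (barrier2 δ κ k₁ k₂ θ₁ θ₂)
          ≤ bellObj p₀ δ fL (expEta k₁ k₂) (prem2 κ θ₁ θ₂) V x b) ∧
      (∀ b : ℝ, 0 ≤ b →
        bellObj p₀ δ fL (expEta k₁ k₂) (prem2 κ θ₁ θ₂) V x b
          = bellObj p₀ δ fL (expEta k₁ k₂) (prem2 κ θ₁ θ₂) V x
              (barrier2 δ κ k₁ k₂ θ₁ θ₂) →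
        b = barrier2 δ κ k₁ k₂ θ₁ θ₂) :=
  stmt_7_general p₀ δ μ M κ k₁ k₂ θ₁ θ₂ fL hδ hκ hk₁ hk₂ hfpos hfint hμpos hθ₁ hθ₂ V hV

end
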